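/- Let w be a weight sequence, H a separable complex Hilbert space, ε > 0, and A ∈ E_w(H) a non-normal operator with a Schur decomposition A = D + N whose quasi-nilpotent part N satisfies |N|_{ẇ̄} > 0. Let C > 0 be a constant such that ‖Q^{2k}‖ ≤ C^{2k}·(s_1(Q)⋯s_k(Q))² for every k ≥ 1 and every quasi-nilpotent compact operator Q on H. Then the ε-pseudospectrum of A satisfies σ_ε(A) ⊆ { z ∈ ℂ : d(z,σ(A)) < |N|_{ẇ̄} · H_w( ε / |N|_{ẇ̄} ) }. -/

import Mathlib

open Filter Topology

noncomputable section

def IsWeight (w : ℕ → ℝ) : Prop :=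
  (∀ k, 1 ≤ k → w (k + 1) ≤ w k) ∧ (∀ k, 1 ≤ k → 0 ≤ w k) ∧
    Filter.Tendsto w Filter.atTop (nhds 0)

def sNum {H₁ H₂ : Type*} [NormedAddCommGroup H₁] [NormedSpace ℂ H₁]
    [NormedAddCommGroup H₂] [NormedSpace ℂ H₂] (k : ℕ) (A : H₁ →L[ℂ] H₂) : ℝ :=
  sInf {c : ℝ | ∃ F : H₁ →L[ℂ] H₂,
    Module.rank ℂ (LinearMap.range (F : H₁ →ₗ[ℂ] H₂)) < (k : Cardinal) ∧ c = ‖A - F‖}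

def MemE {H₁ H₂ : Type*} [NormedAddCommGroup H₁] [NormedSpace ℂ H₁]
    [NormedAddCommGroup H₂] [NormedSpace ℂ H₂] (w : ℕ → ℝ) (A : H₁ →L[ℂ] H₂) : Prop :=
  IsCompactOperator A ∧ ∃ M : ℝ, 0 ≤ M ∧ ∀ k, 1 ≤ k → sNum k A ≤ M * w k

def gaugeE {H₁ H₂ : Type*} [NormedAddCommGroup H₁] [NormedSpace ℂ H₁]
    [NormedAddCommGroup H₂] [NormedSpace ℂ H₂] (w : ℕ → ℝ) (A : H₁ →L[ℂ] H₂) : ℝ :=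
  sInf {M : ℝ | 0 ≤ M ∧ ∀ k, 1 ≤ k → sNum k A ≤ M * w k}

def dbl (w : ℕ → ℝ) (k : ℕ) : ℝ := w ((k + 1) / 2)

def gmean (w : ℕ → ℝ) (k : ℕ) : ℝ := (∏ n ∈ Finset.Icc 1 k, w n) ^ ((1 : ℝ) / (k : ℝ))

def algMult {H : Type*} [NormedAddCommGroup H] [NormedSpace ℂ H] (A : H →L[ℂ] H) (z : ℂ) : ℕ :=
  Module.finrank ℂ (Module.End.maxGenEigenspace (A : H →ₗ[ℂ] H) z)

def IsEigSeq {H : Type*} [NormedAddCommGroup H] [NormedSpace ℂ H]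
    (A : H →L[ℂ] H) (lam : ℕ → ℂ) : Prop :=
  (∀ k, 1 ≤ k → ‖lam (k + 1)‖ ≤ ‖lam k‖) ∧
  ∀ z : ℂ, z ≠ 0 →
    {k : ℕ | 1 ≤ k ∧ lam k = z}.Finite ∧ {k : ℕ | 1 ≤ k ∧ lam k = z}.ncard = algMult A z

def IsSchurDecomp {H : Type*} [NormedAddCommGroup H] [InnerProductSpace ℂ H] [CompleteSpace H]
    (A D N : H →L[ℂ] H) : Prop :=
  A = D + N ∧ IsCompactOperator D ∧ IsCompactOperator N ∧ IsStarNormal D ∧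
  (∀ z : ℂ, z ≠ 0 → algMult D z = algMult A z) ∧
  spectrum ℂ D = spectrum ℂ A ∧
  spectrum ℂ N = {0} ∧
  ∀ z : ℂ, z ∉ spectrum ℂ A →
    spectrum ℂ (Ring.inverse (algebraMap ℂ (H →L[ℂ] H) z - D) * N) = {0}

def Fw (C : ℝ) (w : ℕ → ℝ) (r : ℝ) : ℝ :=
  (1 + r * w 1) *
    (1 + ∑' k : ℕ, (∏ n ∈ Finset.Icc 1 (k + 1), w n) ^ 2 * (C * r) ^ (2 * (k + 1)))

def Ftilde (C : ℝ) (w : ℕ → ℝ) (r : ℝ) : ℝ := r * Fw C w r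

def specVar (s t : Set ℂ) : ℝ := ⨆ z : s, Metric.infDist (z : ℂ) t

def hausD (s t : Set ℂ) : ℝ := max (specVar s t) (specVar t s)

def pseudoSpec {H : Type*} [NormedAddCommGroup H] [NormedSpace ℂ H] [CompleteSpace H]
    (ε : ℝ) (A : H →L[ℂ] H) : Set ℂ :=
  spectrum ℂ A ∪ {z : ℂ | z ∉ spectrum ℂ A ∧ 1 / ε < ‖resolvent A z‖}

variable {H : Type*} [NormedAddCommGroup H] [InnerProductSpace ℂ H] [CompleteSpace H]
  [TopologicalSpace.SeparableSpace H]

/-!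
For `z ∉ σ(A)` let `d = d(z, σ(A))` and `R = (zI - D)⁻¹`. Since `D` is normal, `‖R‖ ≤ 1/d`, and
`zI - A = (zI - D)(I - B)` with `B = RN` compact and quasi-nilpotent, so
`s_k(B) ≤ ‖R‖ s_k(N) ≤ (ν/d) ẇ̄_k` where `ν = |N|_ẇ̄`. The hypothesis on `C` bounds
`‖B^{2k}‖` by the `k`-th term of the series defining `F_ẇ̄(ν/d)`, and the Neumann series
`(I - B)⁻¹ = (I + B) Σ B^{2k}` gives `‖(zI - A)⁻¹‖ ≤ F_ẇ̄(ν/d)/d`. For `z ∈ σ_ε(A)` this reads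
`ν/ε < F̃_ẇ̄(ν/d)`, and since `F̃_ẇ̄` is increasing, `G(ν/ε) < ν/d`, i.e. `d < ν / G(ν/ε)`.
-/
universe u

section SingularValues

variable {H₁ H₂ H₃ : Type u} [NormedAddCommGroup H₁] [NormedSpace ℂ H₁]
  [NormedAddCommGroup H₂] [NormedSpace ℂ H₂] [NormedAddCommGroup H₃] [NormedSpace ℂ H₃]

lemma sNum_nonneg (k : ℕ) (A : H₁ →L[ℂ] H₂) : 0 ≤ sNum k A :=
  Real.sInf_nonneg fun _ ⟨_, _, hc⟩ => hc ▸ norm_nonneg _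

lemma sNum_le_norm_sub {k : ℕ} (A F : H₁ →L[ℂ] H₂)
    (hF : Module.rank ℂ (LinearMap.range (F : H₁ →ₗ[ℂ] H₂)) < k) : sNum k A ≤ ‖A - F‖ :=
  csInf_le ⟨0, fun _ ⟨_, _, hc⟩ => hc ▸ norm_nonneg _⟩ ⟨F, hF, rfl⟩

lemma rank_range_zero_lt {k : ℕ} (hk : 1 ≤ k) :
    Module.rank ℂ (LinearMap.range ((0 : H₁ →L[ℂ] H₂) : H₁ →ₗ[ℂ] H₂)) < k := by
  rw [ContinuousLinearMap.toLinearMap_zero, LinearMap.range_zero, rank_bot]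
  exact_mod_cast hk

lemma sNum_one (A : H₁ →L[ℂ] H₂) : sNum 1 A = ‖A‖ := by
  refine le_antisymm (by simpa using sNum_le_norm_sub A 0 (rank_range_zero_lt le_rfl)) ?_
  refine le_csInf ⟨_, 0, rank_range_zero_lt le_rfl, rfl⟩ ?_
  rintro _ ⟨F, hF, rfl⟩
  rw [Nat.cast_one, Cardinal.lt_one_iff, Submodule.rank_eq_zero, LinearMap.range_eq_bot] at hF
  simp [ContinuousLinearMap.coe_injective (hF.trans ContinuousLinearMap.toLinearMap_zero.symm)]

lemma sNum_comp_le {k : ℕ} (hk : 1 ≤ k) (R : H₂ →L[ℂ] H₃) (T : H₁ →L[ℂ] H₂) :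
    sNum k (R.comp T) ≤ ‖R‖ * sNum k T := by
  rw [sNum, sNum, ← smul_eq_mul, ← Real.sInf_smul_of_nonneg (norm_nonneg R)]
  refine le_csInf (Set.Nonempty.smul_set ⟨_, 0, rank_range_zero_lt hk, rfl⟩) ?_
  rintro _ ⟨_, ⟨F, hF, rfl⟩, rfl⟩
  have hRF : Module.rank ℂ (LinearMap.range ((R.comp F : H₁ →L[ℂ] H₃) : H₁ →ₗ[ℂ] H₃)) < k := by
    rw [ContinuousLinearMap.toLinearMap_comp, LinearMap.range_comp]
    exact (rank_map_le (R : H₂ →ₗ[ℂ] H₃) _).trans_lt hF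
  calc sNum k (R.comp T) ≤ ‖R.comp T - R.comp F‖ := sNum_le_norm_sub _ _ hRF
    _ = ‖R.comp (T - F)‖ := by rw [ContinuousLinearMap.comp_sub]
    _ ≤ ‖R‖ • ‖T - F‖ := R.opNorm_comp_le _

end SingularValues

lemma IsWeight.nonneg {w : ℕ → ℝ} (hw : IsWeight w) {k : ℕ} (hk : 1 ≤ k) : 0 ≤ w k :=
  hw.2.1 k hk

lemma gmean_nonneg {w : ℕ → ℝ} (hw : IsWeight w) (k : ℕ) : 0 ≤ gmean w k :=
  Real.rpow_nonneg (Finset.prod_nonneg fun _ hn => hw.nonneg (Finset.mem_Icc.mp hn).1) _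

lemma gmean_le_average {w : ℕ → ℝ} (hw : IsWeight w) {k : ℕ} (hk : 1 ≤ k) :
    gmean w k ≤ (k : ℝ)⁻¹ * ∑ n ∈ Finset.range k, w (n + 1) := by
  have hcard : ∑ _n ∈ Finset.Icc 1 k, (1 : ℝ) = k := by simp
  have hamgm := Real.geom_mean_le_arith_mean (Finset.Icc 1 k) (fun _ => 1) w
    (fun _ _ => zero_le_one) (hcard ▸ Nat.cast_pos.2 hk)
    (fun n hn => hw.nonneg (Finset.mem_Icc.mp hn).1)
  simp only [Real.rpow_one, one_mul, hcard] at hamgm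
  rw [gmean, one_div, inv_mul_eq_div, Finset.range_eq_Ico, Finset.sum_Ico_add', zero_add,
    Finset.Ico_add_one_right_eq_Icc]
  exact hamgm

lemma IsWeight.tendsto_gmean {w : ℕ → ℝ} (hw : IsWeight w) :
    Tendsto (gmean w) atTop (𝓝 0) := by
  have hcesaro := ((tendsto_add_atTop_iff_nat 1).mpr hw.2.2).cesaro
  refine tendsto_of_tendsto_of_tendsto_of_le_of_le' tendsto_const_nhds hcesaro
    (Eventually.of_forall (gmean_nonneg hw)) ?_
  filter_upwards [eventually_ge_atTop 1] with k hk using gmean_le_average hw hk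

lemma tendsto_dbl {u : ℕ → ℝ} {l : ℝ} (hu : Tendsto u atTop (𝓝 l)) :
    Tendsto (dbl u) atTop (𝓝 l) :=
  hu.comp ((Nat.tendsto_div_const_atTop two_ne_zero).comp (tendsto_add_atTop_nat 1))

section Series

def fwTerm (C : ℝ) (v : ℕ → ℝ) (r : ℝ) (k : ℕ) : ℝ :=
  (∏ n ∈ Finset.Icc 1 (k + 1), v n) ^ 2 * (C * r) ^ (2 * (k + 1))

variable {C : ℝ} {v : ℕ → ℝ}

lemma Fw_eq (r : ℝ) : Fw C v r = (1 + r * v 1) * (1 + ∑' k, fwTerm C v r k) := rfl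

lemma fwTerm_nonneg (r : ℝ) (k : ℕ) : 0 ≤ fwTerm C v r k := by
  rw [fwTerm, pow_mul]
  positivity

lemma fwTerm_succ (r : ℝ) (k : ℕ) :
    fwTerm C v r (k + 1) = fwTerm C v r k * (C * r * v (k + 2)) ^ 2 := by
  rw [fwTerm, fwTerm, Finset.prod_Icc_succ_top (by omega)]
  ring

lemma fwTerm_mono {r s : ℝ} (hr : 0 ≤ r) (hrs : r ≤ s) (k : ℕ) :
    fwTerm C v r k ≤ fwTerm C v s k := by
  rw [fwTerm, fwTerm, pow_mul, pow_mul, mul_pow C r, mul_pow C s]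
  gcongr

lemma summable_fwTerm (hv : Tendsto v atTop (𝓝 0)) (r : ℝ) : Summable (fwTerm C v r) := by
  have hratio : Tendsto (fun k => (C * r * v (k + 2)) ^ 2) atTop (𝓝 0) := by
    simpa using ((hv.comp (tendsto_add_atTop_nat 2)).const_mul (C * r)).pow 2
  refine summable_of_ratio_norm_eventually_le (r := 1 / 2) (by norm_num) ?_
  filter_upwards [hratio.eventually (ge_mem_nhds (by norm_num : (0 : ℝ) < 1 / 2))] with k hk
  rw [fwTerm_succ, norm_mul, Real.norm_of_nonneg (sq_nonneg _), mul_comm]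
  exact mul_le_mul_of_nonneg_right hk (norm_nonneg _)

lemma Ftilde_monotoneOn (hv1 : 0 ≤ v 1) (hv : Tendsto v atTop (𝓝 0)) :
    MonotoneOn (Ftilde C v) (Set.Ici 0) := by
  intro r (hr : 0 ≤ r) s _ hrs
  have hsum : ∑' k, fwTerm C v r k ≤ ∑' k, fwTerm C v s k :=
    Summable.tsum_le_tsum (fwTerm_mono hr hrs) (summable_fwTerm hv r) (summable_fwTerm hv s)
  have hsum_nonneg : 0 ≤ ∑' k, fwTerm C v r k := tsum_nonneg (fwTerm_nonneg r)
  rw [Ftilde, Ftilde, Fw_eq, Fw_eq]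
  gcongr
  exact add_nonneg zero_le_one (mul_nonneg (hr.trans hrs) hv1)

lemma Ftilde_zero : Ftilde C v 0 = 0 := zero_mul _

end Series

section Gauge

variable {H₁ H₂ : Type*} [NormedAddCommGroup H₁] [NormedSpace ℂ H₁]
  [NormedAddCommGroup H₂] [NormedSpace ℂ H₂]

lemma sNum_le_gaugeE_mul {v : ℕ → ℝ} {N : H₁ →L[ℂ] H₂} (hN : gaugeE v N ≠ 0) {k : ℕ}
    (hk : 1 ≤ k) : sNum k N ≤ gaugeE v N * v k := by
  set S := {M : ℝ | 0 ≤ M ∧ ∀ k, 1 ≤ k → sNum k N ≤ M * v k}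
  have hne : S.Nonempty :=
    Set.nonempty_iff_ne_empty.2 fun h => hN <| (congrArg sInf h).trans Real.sInf_empty
  have hclosed : IsClosed S := by
    simp only [S, Set.ofPred_and, Set.ofPred_forall]
    exact isClosed_Ici.inter <| isClosed_iInter fun k => isClosed_iInter fun _ =>
      isClosed_le continuous_const (continuous_id.mul continuous_const)
  exact (hclosed.csInf_mem hne ⟨0, fun _ hM => hM.1⟩).2 k hk

end Gauge

lemma Ring.inverse_sub_add {R : Type*} [Ring R] {c D N : R} (hD : IsUnit (c - D)) :
    Ring.inverse (c - (D + N)) =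
      Ring.inverse (1 - Ring.inverse (c - D) * N) * Ring.inverse (c - D) := by
  have hfactor : c - (D + N) = (c - D) * (1 - Ring.inverse (c - D) * N) := by
    rw [mul_sub, mul_one, Ring.mul_inverse_cancel_left _ _ hD]
    abel
  rw [hfactor, Ring.inverse_mul (Or.inl hD)]

lemma norm_inverse_one_sub_le {R : Type*} [NormedRing R] [NormOneClass R] [CompleteSpace R]
    {B : R} (hB : IsUnit (1 - B)) {a : ℕ → ℝ} (ha : Summable a)
    (hBa : ∀ k, ‖B ^ (2 * (k + 1))‖ ≤ a k) :
    ‖Ring.inverse (1 - B)‖ ≤ (1 + ‖B‖) * (1 + ∑' k, a k) := by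
  have hBa' : ∀ k, ‖(B ^ 2) ^ (k + 1)‖ ≤ a k := fun k => by rw [← pow_mul]; exact hBa k
  have hsum : Summable fun k => ‖(B ^ 2) ^ k‖ :=
    (summable_nat_add_iff 1).1 (.of_nonneg_of_le (fun _ => norm_nonneg _) hBa' ha)
  set T := ∑' k, (B ^ 2) ^ k
  have hT : ‖T‖ ≤ 1 + ∑' k, a k :=
    calc ‖T‖ ≤ ∑' k, ‖(B ^ 2) ^ k‖ := norm_tsum_le_tsum_norm hsum
      _ = 1 + ∑' k, ‖(B ^ 2) ^ (k + 1)‖ := by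
        rw [hsum.tsum_eq_zero_add, pow_zero, norm_one, add_comm]
      _ ≤ 1 + ∑' k, a k :=
        add_le_add_right (Summable.tsum_le_tsum hBa' ((summable_nat_add_iff 1).2 hsum) ha) 1
  have hright : (1 - B) * ((1 + B) * T) = 1 := by
    rw [← mul_assoc, show (1 - B) * (1 + B) = 1 - B ^ 2 by noncomm_ring]
    exact hsum.of_norm.one_sub_mul_tsum_pow
  have hinv : Ring.inverse (1 - B) = (1 + B) * T := by
    simpa using (Ring.inverse_mul_eq_iff_eq_mul _ 1 _ hB).2 hright.symm
  calc ‖Ring.inverse (1 - B)‖ ≤ ‖1 + B‖ * ‖T‖ := hinv ▸ norm_mul_le _ _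
    _ ≤ (1 + ‖B‖) * (1 + ∑' k, a k) := by
      gcongr
      exact (norm_add_le _ _).trans_eq (by rw [norm_one])

section CStarAlgebra

variable {A : Type*} [CStarAlgebra A]

instance isStarNormal_algebraMap_sub (z : ℂ) (D : A) [IsStarNormal D] :
    IsStarNormal (algebraMap ℂ A z - D) := by
  have : IsStarNormal (algebraMap ℂ A z) := by
    rw [Algebra.algebraMap_eq_smul_one]
    infer_instance
  exact (Algebra.commute_algebraMap_left z (star D)).isStarNormal_sub

lemma norm_inv_le_of_isStarNormal (u : Aˣ) [IsStarNormal (u : A)] {d : ℝ} (hd : 0 < d)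
    (hspec : ∀ μ ∈ spectrum ℂ (u : A), d ≤ ‖μ‖) : ‖(↑u⁻¹ : A)‖ ≤ d⁻¹ := by
  have hrad : spectralRadius ℂ (↑u⁻¹ : A) ≤ ENNReal.ofReal d⁻¹ := by
    refine iSup₂_le fun μ hμ => ?_
    rw [← spectrum.map_inv, Set.mem_inv] at hμ
    have hdμ : d ≤ ‖μ‖⁻¹ := norm_inv μ ▸ hspec _ hμ
    have hμ : 0 < ‖μ‖ := by
      by_contra! h
      rw [le_antisymm h (norm_nonneg μ), inv_zero] at hdμ
      linarith
    rw [← enorm_eq_nnnorm, ← ofReal_norm]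
    exact ENNReal.ofReal_le_ofReal ((le_inv_comm₀ hd hμ).1 hdμ)
  rw [IsStarNormal.spectralRadius_eq_nnnorm, ← enorm_eq_nnnorm, ← ofReal_norm] at hrad
  exact (ENNReal.ofReal_le_ofReal_iff (by positivity)).1 hrad

lemma norm_resolvent_le_of_isStarNormal [Nontrivial A] (D : A) [IsStarNormal D] {z : ℂ}
    (hz : z ∉ spectrum ℂ D) : ‖resolvent D z‖ ≤ (Metric.infDist z (spectrum ℂ D))⁻¹ := by
  obtain ⟨u, hu⟩ := spectrum.notMem_iff.1 hz
  have : IsStarNormal (u : A) := hu ▸ isStarNormal_algebraMap_sub z D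
  have hd := ((spectrum.isClosed D).notMem_iff_infDist_pos (spectrum.nonempty D)).1 hz
  rw [resolvent, ← hu, Ring.inverse_unit]
  refine norm_inv_le_of_isStarNormal u hd fun μ hμ => ?_
  rw [hu, ← spectrum.singleton_sub_eq, Set.singleton_sub] at hμ
  obtain ⟨y, hy, rfl⟩ := hμ
  exact (Metric.infDist_le_dist_of_mem hy).trans_eq (dist_eq_norm z y)

end CStarAlgebra

lemma norm_pow_two_mul_le_fwTerm {E : Type*} [NormedAddCommGroup E] [NormedSpace ℂ E]
    {Q : E →L[ℂ] E} {C r : ℝ} {v : ℕ → ℝ} (hQ : ∀ n, 1 ≤ n → sNum n Q ≤ r * v n)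
    (hDos : ∀ k, 1 ≤ k → ‖Q ^ (2 * k)‖ ≤ C ^ (2 * k) * (∏ n ∈ Finset.Icc 1 k, sNum n Q) ^ 2)
    (k : ℕ) : ‖Q ^ (2 * (k + 1))‖ ≤ fwTerm C v r k :=
  calc ‖Q ^ (2 * (k + 1))‖
      ≤ C ^ (2 * (k + 1)) * (∏ n ∈ Finset.Icc 1 (k + 1), sNum n Q) ^ 2 := hDos _ k.succ_pos
    _ ≤ C ^ (2 * (k + 1)) * (∏ n ∈ Finset.Icc 1 (k + 1), r * v n) ^ 2 := by
      have hC : 0 ≤ C ^ (2 * (k + 1)) := by rw [pow_mul]; positivity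
      gcongr with n hn
      · exact Finset.prod_nonneg fun n _ => sNum_nonneg n Q
      · exact fun n _ => sNum_nonneg n Q
      · exact hQ n (Finset.mem_Icc.1 hn).1
    _ = fwTerm C v r k := by
      rw [fwTerm, Finset.prod_mul_distrib, Finset.prod_const, Nat.card_Icc, Nat.add_sub_cancel]
      ring

lemma nontrivial_of_infDist_spectrum_pos {E : Type*} [NormedAddCommGroup E] [NormedSpace ℂ E]
    {a : E →L[ℂ] E} {z : ℂ} (h : 0 < Metric.infDist z (spectrum ℂ a)) : Nontrivial E := by
  by_contra hE
  rw [not_nontrivial_iff_subsingleton] at hE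
  rw [spectrum.of_subsingleton, Metric.infDist_empty] at h
  exact h.false

section Resolvent

variable {E : Type*} [NormedAddCommGroup E] [InnerProductSpace ℂ E] [CompleteSpace E]

theorem norm_resolvent_le_Fw {A D N : E →L[ℂ] E} (hSchur : IsSchurDecomp A D N)
    {C ν : ℝ} {v : ℕ → ℝ} (hv : Tendsto v atTop (𝓝 0)) (hN : ∀ n, 1 ≤ n → sNum n N ≤ ν * v n)
    (hDos : ∀ Q : E →L[ℂ] E, IsCompactOperator Q → spectrum ℂ Q = {0} →
      ∀ k, 1 ≤ k → ‖Q ^ (2 * k)‖ ≤ C ^ (2 * k) * (∏ n ∈ Finset.Icc 1 k, sNum n Q) ^ 2)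
    {z : ℂ} (hz : z ∉ spectrum ℂ A) (hd : 0 < Metric.infDist z (spectrum ℂ A)) :
    ‖resolvent A z‖ ≤
      Fw C v (ν / Metric.infDist z (spectrum ℂ A)) / Metric.infDist z (spectrum ℂ A) := by
  obtain ⟨rfl, -, hNcpt, hDnormal, -, hspecD, -, hquasi⟩ := hSchur
  have := nontrivial_of_infDist_spectrum_pos hd
  set d := Metric.infDist z (spectrum ℂ (D + N))
  have hzD : z ∉ spectrum ℂ D := hspecD ▸ hz
  set R := Ring.inverse (algebraMap ℂ (E →L[ℂ] E) z - D)
  have hR : ‖R‖ ≤ d⁻¹ := by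
    have := norm_resolvent_le_of_isStarNormal D hzD
    rwa [hspecD] at this
  set B := R * N
  have hB : ∀ n, 1 ≤ n → sNum n B ≤ ν / d * v n := fun n hn =>
    calc sNum n B ≤ ‖R‖ * sNum n N := sNum_comp_le hn R N
      _ ≤ d⁻¹ * (ν * v n) := mul_le_mul hR (hN n hn) (sNum_nonneg n N) (inv_nonneg.2 hd.le)
      _ = ν / d * v n := by ring
  have hBunit : IsUnit (1 - B) := by
    have h1 : (1 : ℂ) ∉ spectrum ℂ B := by simp [B, R, hquasi z hz]
    simpa using spectrum.notMem_iff.1 h1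
  have hBpow := norm_pow_two_mul_le_fwTerm hB (hDos B (hNcpt.clm_comp R) (hquasi z hz))
  have hsum_nonneg : 0 ≤ ∑' k, fwTerm C v (ν / d) k := tsum_nonneg (fwTerm_nonneg _)
  rw [resolvent, Ring.inverse_sub_add (spectrum.notMem_iff.1 hzD)]
  calc ‖Ring.inverse (1 - B) * R‖ ≤ ‖Ring.inverse (1 - B)‖ * ‖R‖ := norm_mul_le _ _
    _ ≤ (1 + ‖B‖) * (1 + ∑' k, fwTerm C v (ν / d) k) * d⁻¹ :=
      mul_le_mul (norm_inverse_one_sub_le hBunit (summable_fwTerm hv _) hBpow) hR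
        (norm_nonneg R) (by positivity)
    _ ≤ Fw C v (ν / d) * d⁻¹ := by
      rw [Fw_eq]
      gcongr
      exact (sNum_one B).symm.le.trans (hB 1 le_rfl)
    _ = Fw C v (ν / d) / d := (div_eq_mul_inv _ _).symm

end Resolvent

/-- `G` is the inverse of `F̃_ẇ̄` on `[0,∞)`, so `ν·H_w(ε/ν) = ν·(G(ν/ε))⁻¹` for `ν = |N|_ẇ̄`. -/
theorem stmt_19_general (w : ℕ → ℝ) (hw : IsWeight w) (ε : ℝ) (hε : 0 < ε)
    (A D N : H →L[ℂ] H) (hSchur : IsSchurDecomp A D N)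
    (hν : 0 < gaugeE (dbl (gmean w)) N)
    (C : ℝ)
    (hDos : ∀ Q : H →L[ℂ] H, IsCompactOperator Q → spectrum ℂ Q = {0} →
      ∀ k, 1 ≤ k →
        ‖Q ^ (2 * k)‖ ≤ C ^ (2 * k) * (∏ n ∈ Finset.Icc 1 k, sNum n Q) ^ 2)
    (G : ℝ → ℝ)
    (hG₂ : ∀ y, 0 ≤ y → 0 ≤ G y ∧ Ftilde C (dbl (gmean w)) (G y) = y) :
    pseudoSpec ε A ⊆
      {z : ℂ | Metric.infDist z (spectrum ℂ A) <
        gaugeE (dbl (gmean w)) N * (G (gaugeE (dbl (gmean w)) N / ε))⁻¹} := by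
  set v := dbl (gmean w)
  set ν := gaugeE v N
  have hv : Tendsto v atTop (𝓝 0) := tendsto_dbl hw.tendsto_gmean
  obtain ⟨hG0, hGinv⟩ := hG₂ (ν / ε) (by positivity)
  have hGpos : 0 < G (ν / ε) := hG0.lt_of_ne fun h => by
    rw [← h, Ftilde_zero] at hGinv
    exact (div_pos hν hε).ne hGinv
  have hbound_pos : 0 < ν * (G (ν / ε))⁻¹ := by positivity
  rintro z (hzA | ⟨hzA, hres⟩)
  · simpa [Metric.infDist_zero_of_mem hzA] using hbound_pos
  set d := Metric.infDist z (spectrum ℂ A)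
  show d < ν * (G (ν / ε))⁻¹
  have hd_nonneg : 0 ≤ d := Metric.infDist_nonneg
  obtain hd | hd := hd_nonneg.eq_or_lt
  · rwa [← hd]
  have hres_le := norm_resolvent_le_Fw hSchur hv (fun n hn => sNum_le_gaugeE_mul hν.ne' hn)
    hDos hzA hd
  have hFtilde : ν / ε < Ftilde C v (ν / d) :=
    calc ν / ε = ν * (1 / ε) := by ring
      _ < ν * (Fw C v (ν / d) / d) := mul_lt_mul_of_pos_left (hres.trans_le hres_le) hν
      _ = Ftilde C v (ν / d) := by rw [Ftilde]; ring
  have hG_lt : G (ν / ε) < ν / d := by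
    by_contra! h
    have := Ftilde_monotoneOn (C := C) (v := v) (gmean_nonneg hw _) hv (div_pos hν hd).le hG0 h
    linarith
  rw [← div_eq_mul_inv, lt_div_iff₀ hGpos, mul_comm]
  exact (lt_div_iff₀ hd).1 hG_lt

/-- inclusion region for the ε-pseudospectrum of a non-normal
`A ∈ E_w(H)`: `σ_ε(A) ⊆ {z : d(z,σ(A)) < ν·H_w(ε/ν)}` with `ν = |N|_ẇ̄`,
where `G` is the inverse of `F̃_ẇ̄` on `[0,∞)`, so that
`ν·H_w(ε/ν) = ν·(G(ν/ε))⁻¹`. -/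
theorem stmt_19 (w : ℕ → ℝ) (hw : IsWeight w) (ε : ℝ) (hε : 0 < ε)
    (A D N : H →L[ℂ] H) (hA : MemE w A) (hSchur : IsSchurDecomp A D N)
    (hnn : ¬ IsStarNormal A) (hν : 0 < gaugeE (dbl (gmean w)) N)
    (C : ℝ) (hC : 0 < C)
    (hDos : ∀ Q : H →L[ℂ] H, IsCompactOperator Q → spectrum ℂ Q = {0} →
      ∀ k, 1 ≤ k →
        ‖Q ^ (2 * k)‖ ≤ C ^ (2 * k) * (∏ n ∈ Finset.Icc 1 k, sNum n Q) ^ 2)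
    (G : ℝ → ℝ)
    (hG₁ : ∀ r, 0 ≤ r → G (Ftilde C (dbl (gmean w)) r) = r)
    (hG₂ : ∀ y, 0 ≤ y → 0 ≤ G y ∧ Ftilde C (dbl (gmean w)) (G y) = y) :
    pseudoSpec ε A ⊆
      {z : ℂ | Metric.infDist z (spectrum ℂ A) <
        gaugeE (dbl (gmean w)) N * (G (gaugeE (dbl (gmean w)) N / ε))⁻¹} :=
  stmt_19_general w hw ε hε A D N hSchur hν C hDos G hG₂

end
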